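/- arXiv:2412.20909 — 4 statements merged into one kernel-verified Lean document; each statement's English description precedes it below -/
import Mathlib

section
/- Let Q be the quaternion group of order 8 with center Z = {±1}, and let π be a finite-dimensional complex orthogonal representation of Q^n. Let θ be a nontrivial linear character of the subgroup Z^n ≤ Q^n. Then the multiplicity [θ, π|_{Z^n}] of θ in the restriction of π to Z^n is divisible by 4. -/
open CategoryTheory

def FDRep.IsOrthogonal {G : Type} [Group G] (X : FDRep ℂ G) : Prop :=
  ∃ B : X.V →ₗ[ℂ] X.V →ₗ[ℂ] ℂ,
    (∀ v w, B v w = B w v) ∧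
    (∀ v, (∀ w, B v w = 0) → v = 0) ∧
    (∀ (g : G) (v w), B (X.ρ g v) (X.ρ g w) = B v w)

/-!
Since `θ` takes values `±1`, averaging over `Zⁿ` shows that the invariant form `B` stays
nondegenerate on the `θ`-eigenspace `W`. Pick a factor on which `θ` is nontrivial; there the
center acts on `W` by `-1`, so the quaternion units `i, j` of that factor act on `W` by
operators `I, J` with `I² = J² = -1`, `JI = -IJ`, both preserving `B`. Then `J` exchanges the
`±i`-eigenspaces of `I`, so `dim W = 2 dim X` for the `i`-eigenspace `X`, and `B(·, J ·)` is a
nondegenerate alternating form on `X`, so `dim X` is even.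
-/

open Module

namespace Module.End

variable {K V : Type*} [Field K] [AddCommGroup V] [Module K V]

theorem mapsTo_eigenspace_neg_of_anticomm {I J : End K V} (hIJ : J * I = -(I * J)) (μ : K) :
    Set.MapsTo J (eigenspace I μ) (eigenspace I (-μ)) := by
  intro v hv
  rw [SetLike.mem_coe, mem_eigenspace_iff] at hv ⊢
  have h := congrArg (· v) hIJ
  simp only [mul_apply, hv, map_smul, LinearMap.neg_apply] at h
  rw [neg_smul, h, neg_neg]

theorem finrank_eigenspace_le_of_anticomm [FiniteDimensional K V] {I J : End K V}
    (hJ : Function.Injective J) (hIJ : J * I = -(I * J)) (μ : K) :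
    finrank K (eigenspace I μ) ≤ finrank K (eigenspace I (-μ)) :=
  LinearMap.finrank_le_finrank_of_injective
    (f := J.restrict fun _ ↦ (mapsTo_eigenspace_neg_of_anticomm hIJ μ ·))
    (by simp [LinearMap.ker_eq_bot.mpr hJ])

theorem isCompl_eigenspace_I_neg_I {V : Type*} [AddCommGroup V] [Module ℂ V] {I : End ℂ V}
    (hI : I * I = -1) : IsCompl (eigenspace I Complex.I) (eigenspace I (-Complex.I)) := by
  refine ⟨(eigenspaces_iSupIndep I).pairwiseDisjoint (by norm_num [Complex.ext_iff]), ?_⟩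
  rw [codisjoint_iff, eq_top_iff]
  intro v _
  have hIv : I (I v) = -v := by simpa using congrArg (· v) hI
  have hv : v = ((1 / 2 : ℂ) • v - (Complex.I / 2) • I v) +
      ((1 / 2 : ℂ) • v + (Complex.I / 2) • I v) := by
    module
  rw [hv]
  refine Submodule.add_mem_sup ?_ ?_ <;>
  · rw [mem_eigenspace_iff]
    simp only [map_sub, map_add, map_smul, hIv]
    match_scalars <;> simp [Complex.ext_iff]

end Module.End

namespace LinearMap.BilinForm

section Field

variable {K V : Type*} [Field K] [AddCommGroup V] [Module K V]

theorem IsAlt.even_finrank [FiniteDimensional K V] {B : LinearMap.BilinForm K V} (hB : B.IsAlt)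
    (hnd : B.Nondegenerate) (hK : ringChar K ≠ 2) : Even (finrank K V) := by
  classical
  let b := Module.finBasis K V
  set M := LinearMap.BilinForm.toMatrix b B
  have hskew : M.transpose = -M := by
    ext i j
    simp [M, LinearMap.BilinForm.toMatrix_apply, ← hB.neg_eq (b i) (b j)]
  have hdet : M.det ≠ 0 := (nondegenerate_iff_det_ne_zero b).mp hnd
  have h := congrArg Matrix.det hskew
  rw [Matrix.det_transpose, Matrix.det_neg, Fintype.card_fin] at h
  rw [← neg_one_pow_eq_one_iff_even (Ring.neg_one_ne_one_of_char_ne_two hK)]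
  exact (mul_eq_right₀ hdet).mp h.symm

theorem apply_eq_zero_of_mem_eigenspace {B : LinearMap.BilinForm K V} {I : End K V}
    (hBI : ∀ v w, B (I v) (I w) = B v w) {μ ν : K} (hμν : μ * ν ≠ 1) {v w : V}
    (hv : v ∈ End.eigenspace I μ) (hw : w ∈ End.eigenspace I ν) : B v w = 0 := by
  have h := hBI v w
  rw [End.mem_eigenspace_iff.mp hv, End.mem_eigenspace_iff.mp hw, map_smul, map_smul,
    smul_apply, smul_eq_mul, smul_eq_mul, ← mul_assoc, mul_comm ν μ] at h
  by_contra hne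
  exact hμν ((mul_eq_right₀ hne).mp h)

theorem IsSymm.isAlt_compl₂ {B : LinearMap.BilinForm K V} (hs : B.IsSymm) {J : End K V}
    (hJ : J * J = -1) (hBJ : ∀ v w, B (J v) (J w) = B v w) (hK : ringChar K ≠ 2) :
    LinearMap.BilinForm.IsAlt (B.compl₂ J) := by
  intro v
  have h := hBJ v (J v)
  rw [← End.mul_apply, hJ, LinearMap.neg_apply, End.one_apply, map_neg, hs.eq] at h
  exact (Ring.eq_self_iff_eq_zero_of_char_ne_two hK).mp h

end Field

section Complex

variable {V : Type*} [AddCommGroup V] [Module ℂ V]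

open Module.End in
theorem separatingLeft_restrict_compl₂_eigenspace {B : LinearMap.BilinForm ℂ V}
    (hnd : B.SeparatingLeft) {I J : End ℂ V} (hI : I * I = -1) (hJ : J * J = -1)
    (hIJ : J * I = -(I * J)) (hBI : ∀ v w, B (I v) (I w) = B v w) :
    (LinearMap.BilinForm.restrict (B.compl₂ J) (eigenspace I Complex.I)).SeparatingLeft := by
  rintro ⟨a, ha⟩ h
  suffices ∀ u, B a u = 0 from Subtype.ext (hnd a this)
  intro u
  obtain ⟨x, hx, y, hy, rfl⟩ := Submodule.mem_sup.mp
    ((isCompl_eigenspace_I_neg_I hI).sup_eq_top ▸ Submodule.mem_top (x := u))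
  have hJy : -J y ∈ eigenspace I Complex.I := by
    have := mapsTo_eigenspace_neg_of_anticomm hIJ (-Complex.I) hy
    rw [neg_neg] at this
    exact (eigenspace I Complex.I).neg_mem this
  have hy' : J (-J y) = y := by simp [← End.mul_apply, hJ]
  rw [map_add, apply_eq_zero_of_mem_eigenspace hBI (by norm_num) ha hx, ← hy']
  simpa using h ⟨-J y, hJy⟩

theorem four_dvd_finrank_of_anticomm [FiniteDimensional ℂ V] {B : LinearMap.BilinForm ℂ V}
    (hs : B.IsSymm) (hnd : B.Nondegenerate) {I J : End ℂ V}
    (hI : I * I = -1) (hJ : J * J = -1) (hIJ : J * I = -(I * J))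
    (hBI : ∀ v w, B (I v) (I w) = B v w) (hBJ : ∀ v w, B (J v) (J w) = B v w) :
    4 ∣ finrank ℂ V := by
  have hchar : ringChar ℂ ≠ 2 := by simp
  have hJinj : Function.Injective J := fun v w h ↦ by
    simpa [← End.mul_apply, hJ] using congrArg J h
  have hYX := End.finrank_eigenspace_le_of_anticomm hJinj hIJ (-Complex.I)
  rw [neg_neg] at hYX
  have hXY := le_antisymm (End.finrank_eigenspace_le_of_anticomm hJinj hIJ Complex.I) hYX
  have hC : (LinearMap.BilinForm.restrict (B.compl₂ J) (End.eigenspace I Complex.I)).IsAlt :=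
    fun x ↦ hs.isAlt_compl₂ hJ hBJ hchar x
  obtain ⟨k, hk⟩ := hC.even_finrank
    (hC.isRefl.nondegenerate_iff_separatingLeft.mpr
      (separatingLeft_restrict_compl₂_eigenspace hnd.1 hI hJ hIJ hBI)) hchar
  rw [← Submodule.finrank_add_eq_of_isCompl (End.isCompl_eigenspace_I_neg_I hI), ← hXY, hk]
  omega

end Complex

end LinearMap.BilinForm

namespace Representation

section FiniteGroup

variable {k A V : Type*} [Field k] [Group A] [Fintype A] [AddCommGroup V] [Module k V]

theorem sum_smul_apply_mem_iInf_eigenspace (σ : Representation k A V) (θ : A →* k) (u : V) :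
    ∑ a, θ a⁻¹ • σ a u ∈ ⨅ a, End.eigenspace (σ a) (θ a) := by
  simp only [Submodule.mem_iInf, End.mem_eigenspace_iff]
  intro b
  rw [map_sum, Finset.smul_sum]
  have hθb : θ b * θ b⁻¹ = 1 := by rw [← map_mul, mul_inv_cancel, map_one]
  refine Fintype.sum_equiv (Equiv.mulLeft b) _ _ fun a ↦ ?_
  simp only [Equiv.coe_mulLeft, map_smul, ← End.mul_apply, smul_smul, mul_inv_rev, map_mul]
  congr 1
  linear_combination (-θ a⁻¹) * hθb

theorem separatingLeft_restrict_iInf_eigenspace (σ : Representation k A V)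
    {B : LinearMap.BilinForm k V} (hnd : B.SeparatingLeft)
    (hB : ∀ a v w, B (σ a v) (σ a w) = B v w) {θ : A →* k} (hθ : ∀ a, θ a * θ a = 1)
    (hA : (Fintype.card A : k) ≠ 0) :
    (B.restrict (⨅ a, End.eigenspace (σ a) (θ a))).SeparatingLeft := by
  rintro ⟨v, hv⟩ h
  refine Subtype.ext (hnd v fun u ↦ ?_)
  have hσv : ∀ a, B v (σ a u) = θ a⁻¹ * B v u := fun a ↦ by
    have hva := End.mem_eigenspace_iff.mp ((Submodule.mem_iInf _).mp hv a⁻¹)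
    rw [← hB a⁻¹, ← End.mul_apply, ← map_mul, inv_mul_cancel, map_one, End.one_apply, hva,
      LinearMap.map_smul₂, smul_eq_mul]
  have hw := h ⟨_, sum_smul_apply_mem_iInf_eigenspace σ θ u⟩
  simp only [LinearMap.BilinForm.restrict_apply, LinearMap.domRestrict_apply, map_sum, map_smul,
    smul_eq_mul, hσv, ← mul_assoc, hθ, one_mul, Finset.sum_const, Finset.card_univ,
    nsmul_eq_mul] at hw
  exact (mul_eq_zero.mp hw).resolve_left hA

end FiniteGroup

section Central

variable {k G A V : Type*} [CommRing k] [Group G] [Monoid A] [AddCommGroup V] [Module k V]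

def eigenSubrepOfCentral (ρ : Representation k G V) (ι : A →* G)
    (hι : ∀ a, ι a ∈ Subgroup.center G) (θ : A →* k) : Subrepresentation ρ where
  toSubmodule := ⨅ a, End.eigenspace (ρ (ι a)) (θ a)
  apply_mem_toSubmodule g v hv := by
    simp only [Submodule.mem_iInf] at hv ⊢
    refine fun a ↦ End.mapsTo_genEigenspace_of_comm ?_ (θ a) 1 (hv a)
    rw [Commute, SemiconjBy, ← map_mul, ← map_mul, Subgroup.mem_center_iff.mp (hι a) g]

theorem eigenSubrepOfCentral_apply (ρ : Representation k G V) (ι : A →* G)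
    (hι : ∀ a, ι a ∈ Subgroup.center G) (θ : A →* k) (a : A) :
    (eigenSubrepOfCentral ρ ι hι θ).toRepresentation (ι a) = θ a • 1 := by
  ext ⟨v, hv⟩
  exact End.mem_eigenspace_iff.mp ((Submodule.mem_iInf _).mp hv a)

end Central

theorem four_dvd_finrank_of_quaternion_relations {G V : Type*} [Group G] [AddCommGroup V]
    [Module ℂ V] [FiniteDimensional ℂ V] (ρ : Representation ℂ G V)
    {B : LinearMap.BilinForm ℂ V} (hs : B.IsSymm) (hnd : B.Nondegenerate)
    (hB : ∀ g v w, B (ρ g v) (ρ g w) = B v w) {x y z : G} (hz : ρ z = -1)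
    (hx : x * x = z) (hy : y * y = z) (hyx : y * x = z * (x * y)) : 4 ∣ finrank ℂ V :=
  LinearMap.BilinForm.four_dvd_finrank_of_anticomm hs hnd (I := ρ x) (J := ρ y)
    (by rw [← map_mul, hx, hz]) (by rw [← map_mul, hy, hz])
    (by rw [← map_mul, hyx, map_mul, hz, map_mul, neg_one_mul]) (hB x) (hB y)

end Representation

theorem MonoidHom.exists_apply_mulSingle_ne_one {ι M N : Type*} [Finite ι] [DecidableEq ι]
    [Monoid M] [IsMulCommutative M] [CommMonoid N] {θ : (ι → M) →* N} (hθ : θ ≠ 1) :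
    ∃ i m, θ (Pi.mulSingle i m) ≠ 1 := by
  contrapose! hθ
  open scoped IsMulCommutative in
  exact MonoidHom.functions_ext N θ 1 fun i m ↦ by simpa using hθ i m

namespace QuaternionGroup

theorem mem_center_two_iff {g : QuaternionGroup 2} :
    g ∈ Subgroup.center (QuaternionGroup 2) ↔ g = 1 ∨ g = a 2 := by
  revert g
  decide

theorem mul_self_eq_one_of_mem_center_two {g : QuaternionGroup 2}
    (hg : g ∈ Subgroup.center (QuaternionGroup 2)) : g * g = 1 := by
  rcases mem_center_two_iff.mp hg with rfl | rfl <;> rfl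

theorem apply_mul_self_eq_one {ι M : Type*} [Monoid M]
    (θ : (ι → Subgroup.center (QuaternionGroup 2)) →* M)
    (z : ι → Subgroup.center (QuaternionGroup 2)) : θ z * θ z = 1 := by
  have hz : z * z = 1 := funext fun i ↦ Subtype.ext (mul_self_eq_one_of_mem_center_two (z i).2)
  rw [← map_mul, hz, map_one]

theorem exists_apply_mulSingle_eq_neg_one {ι : Type*} [Finite ι] [DecidableEq ι]
    {θ : (ι → Subgroup.center (QuaternionGroup 2)) →* ℂ} (hθ : θ ≠ 1) :
    ∃ i, ∃ c : Subgroup.center (QuaternionGroup 2),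
      (c : QuaternionGroup 2) = a 2 ∧ θ (Pi.mulSingle i c) = -1 := by
  obtain ⟨i, c, hc⟩ := MonoidHom.exists_apply_mulSingle_ne_one hθ
  have hc1 : c ≠ 1 := by
    rintro rfl
    simp at hc
  refine ⟨i, c, (mem_center_two_iff.mp c.2).resolve_left fun h ↦ hc1 (Subtype.ext h), ?_⟩
  exact (mul_self_eq_one_iff.mp (apply_mul_self_eq_one θ _)).resolve_left hc

end QuaternionGroup

/-- Let `Q` be the quaternion group of order 8 with center `Z = {±1}`, `π` an orthogonal
complex representation of `Qⁿ`, and `θ` a nontrivial linear character of `Zⁿ`. Then the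
multiplicity of `θ` in the restriction of `π` to `Zⁿ` (the dimension of the joint
`θ`-eigenspace) is divisible by `4`. -/
theorem stmt_5 (n : ℕ)
    (π : FDRep ℂ (Fin n → QuaternionGroup 2)) (hπ : π.IsOrthogonal)
    (θ : (Fin n → ↥(Subgroup.center (QuaternionGroup 2))) →* ℂ) (hθ : θ ≠ 1) :
    4 ∣ Module.finrank ℂ
        ↥(⨅ z : Fin n → ↥(Subgroup.center (QuaternionGroup 2)),
          Module.End.eigenspace (π.ρ fun i => (z i : QuaternionGroup 2)) (θ z)) := by
  obtain ⟨B, hsymm, hnd, hB⟩ := hπ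
  have hs : LinearMap.BilinForm.IsSymm B := ⟨hsymm⟩
  let ι := MonoidHom.compLeft (Subgroup.center (QuaternionGroup 2)).subtype (Fin n)
  have hι : ∀ z, ι z ∈ Subgroup.center _ := fun z ↦ by
    rw [Subgroup.center_pi]
    exact fun i _ ↦ (z i).2
  let W := Representation.eigenSubrepOfCentral π.ρ ι hι θ
  have hW : (LinearMap.BilinForm.restrict B W.toSubmodule).Nondegenerate :=
    (hs.restrict _).isRefl.nondegenerate_iff_separatingLeft.mpr
      (Representation.separatingLeft_restrict_iInf_eigenspace (π.ρ.comp ι) hnd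
        (fun z ↦ hB (ι z)) (QuaternionGroup.apply_mul_self_eq_one θ) (by simp))
  obtain ⟨i, c, hc, hθc⟩ := QuaternionGroup.exists_apply_mulSingle_eq_neg_one hθ
  have hιc : ι (Pi.mulSingle i c) = Pi.mulSingle i (.a 2) := by
    rw [← hc]
    exact funext (Pi.apply_mulSingle (fun _ ↦ Subtype.val) (fun _ ↦ rfl) i c)
  -- `a 1` and `xa 0` are the quaternion units `i` and `j`, and `a 2 = -1`.
  refine W.toRepresentation.four_dvd_finrank_of_quaternion_relations (hs.restrict _) hW
    (fun g v w ↦ hB g v w) (x := Pi.mulSingle i (.a 1)) (y := Pi.mulSingle i (.xa 0))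
    (z := ι (Pi.mulSingle i c)) ?_ ?_ ?_ ?_
  · rw [Representation.eigenSubrepOfCentral_apply, hθc]
    ext
    simp
  all_goals
    simp only [hιc, ← Pi.mulSingle_mul]
    congr 1
end

section
/- Let E = (ℤ/2)^n with basis e₁, …, e_n, and for 0 ≤ k ≤ n let σ_k be the representation of E given by ⨁_{|v| = k} v, the direct sum of all linear characters of weight k, and let ϑ_k = e₁ + ⋯ + e_k ∈ E (so ϑ₀ = 0). Let σ be a finite-dimensional complex representation of E whose character is invariant under the action of the symmetric group S_n permuting the coordinates of E. Then σ ≅ ⨁_{k=0}^n m_k(σ) σ_k, where each m_k(σ) = (1/2^n) ∑_{i=0}^n χ_{σ_i}(ϑ_k) χ_σ(ϑ_i) is a non-negative integer. -/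
open Finset

/-- Hamming weight of a vector in `𝔽₂ⁿ`. -/
def wt {n : ℕ} (v : Fin n → ZMod 2) : ℕ := (Finset.univ.filter fun j => v j ≠ 0).card

/-- The character of `σ_i = ⨁_{|v| = i} v`, the direct sum of all linear characters of
`E = (ℤ/2)ⁿ` of Hamming weight `i`. -/
noncomputable def sigmaChar (n i : ℕ) (e : Fin n → ZMod 2) : ℂ :=
  ∑ v ∈ Finset.univ.filter fun v : Fin n → ZMod 2 => wt v = i,
    (-1 : ℂ) ^ (∑ j, v j * e j).val

/-- `ϑ_k = e₁ + ⋯ + e_k ∈ (ℤ/2)ⁿ`. -/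
def vartheta (n k : ℕ) : Fin n → ZMod 2 := fun j => if (j : ℕ) < k then 1 else 0

/-!
Let `χ` be the character of `σ` and `χ̂(v) = ∑ₑ (-1)^⟨v, e⟩ χ(e)` its Walsh–Hadamard transform.
Since `2⁻ⁿ ∑ₑ (-1)^⟨v, e⟩ σ(e)` is idempotent, `χ̂(v)` is `2ⁿ` times the dimension of its range,
a natural number. Invariance of `χ` under `S_n` passes to `χ̂`, so `χ̂` is constant on each weight
class `{|v| = k}`, which contains `ϑ_k`; the characters of a weight class sum to `χ_{σ_k}`.
Grouping the inversion formula `2ⁿ χ(e) = ∑ᵥ χ̂(v) (-1)^⟨v, e⟩` by weight gives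
`χ = ∑ₖ 2⁻ⁿ χ̂(ϑ_k) χ_{σ_k}`, and grouping the definition of `χ̂(ϑ_k)` by weight gives the formula
for `m_k = 2⁻ⁿ χ̂(ϑ_k)`.
-/

section Representation

variable {k G V : Type*} [Field k] [Group G] [Fintype G] [AddCommGroup V] [Module k V]
  [FiniteDimensional k V]

/-- `|G|⁻¹ ∑ ψ g • ρ g` is idempotent, so its trace is the dimension of its range. -/
theorem Representation.exists_sum_mul_trace_eq_card_mul [NeZero (Fintype.card G : k)]
    (ρ : Representation k G V) (ψ : G →* k) :
    ∃ N : ℕ, ∑ g, ψ g * LinearMap.trace k V (ρ g) = Fintype.card G * N := by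
  set c : k := (Fintype.card G : k)
  set T : Module.End k V := ∑ g, ψ g • ρ g with hT
  have hTT : T * T = c • T := by
    calc T * T = ∑ g, ∑ h, ψ (g * h) • ρ (g * h) := by
          simp only [T, sum_mul_sum, smul_mul_smul_comm, map_mul]
      _ = ∑ _g : G, T := sum_congr rfl fun g _ =>
          Fintype.sum_equiv (Equiv.mulLeft g) _ _ fun _ => rfl
      _ = c • T := by rw [sum_const, card_univ, Nat.cast_smul_eq_nsmul]
  have hP : IsIdempotentElem (c⁻¹ • T) := by
    rw [IsIdempotentElem, smul_mul_smul_comm, hTT, smul_smul, mul_assoc,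
      inv_mul_cancel₀ (NeZero.ne _), mul_one]
  refine ⟨Module.finrank k (LinearMap.range (c⁻¹ • T)), ?_⟩
  rw [← (LinearMap.IsIdempotentElem.isProj_range _ hP).trace, map_smul, smul_eq_mul,
    mul_inv_cancel_left₀ (NeZero.ne _), hT, map_sum]
  simp only [map_smul, smul_eq_mul]

end Representation

section WalshHadamard

variable {ι : Type*} [Fintype ι]

noncomputable def dotChar (v : ι → ZMod 2) : AddChar (ι → ZMod 2) ℂ where
  toFun e := AddChar.zmodChar 2 (ζ := (-1 : ℂ)) (by norm_num) (v ⬝ᵥ e)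
  map_zero_eq_one' := by simp
  map_add_eq_mul' a b := by rw [dotProduct_add, AddChar.map_add_eq_mul]

lemma dotChar_apply (v e : ι → ZMod 2) : dotChar v e = (-1) ^ (v ⬝ᵥ e).val := rfl

lemma dotChar_comm (v e : ι → ZMod 2) : dotChar v e = dotChar e v := by
  rw [dotChar_apply, dotChar_apply, dotProduct_comm]

lemma dotChar_add_left (v w e : ι → ZMod 2) :
    dotChar (v + w) e = dotChar v e * dotChar w e := by
  rw [dotChar_comm, AddChar.map_add_eq_mul, dotChar_comm e, dotChar_comm e]

lemma dotChar_eq_zero_iff [DecidableEq ι] {v : ι → ZMod 2} : dotChar v = 0 ↔ v = 0 := by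
  refine ⟨fun h => funext fun j => ?_, fun h => by ext e; simp [h, dotChar_apply]⟩
  have hj := DFunLike.congr_fun h (Pi.single j 1)
  rw [dotChar_apply, dotProduct_single_one] at hj
  obtain h0 | h1 : v j = 0 ∨ v j = 1 := by generalize v j = a; revert a; decide
  · exact h0
  · norm_num [h1, ZMod.val_one] at hj

lemma sum_dotChar [DecidableEq ι] (v : ι → ZMod 2) :
    ∑ e, dotChar v e = if v = 0 then 2 ^ Fintype.card ι else 0 := by
  simp [AddChar.sum_eq_ite, dotChar_eq_zero_iff]

noncomputable def walshHadamard [DecidableEq ι] (f : (ι → ZMod 2) → ℂ) (x : ι → ZMod 2) : ℂ :=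
  ∑ v, dotChar v x * f v

theorem walshHadamard_walshHadamard [DecidableEq ι] (f : (ι → ZMod 2) → ℂ) (x : ι → ZMod 2) :
    walshHadamard (walshHadamard f) x = 2 ^ Fintype.card ι * f x := by
  have hortho (e : ι → ZMod 2) :
      ∑ v, dotChar v x * dotChar e v = if e = x then 2 ^ Fintype.card ι else 0 := by
    simp_rw [dotChar_comm _ x, ← dotChar_add_left, sum_dotChar, ← ZModModule.sub_eq_add,
      sub_eq_zero, eq_comm]
  calc walshHadamard (walshHadamard f) x
      = ∑ e, (∑ v, dotChar v x * dotChar e v) * f e := by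
        simp only [walshHadamard, mul_sum, sum_mul, mul_assoc]
        exact sum_comm
    _ = 2 ^ Fintype.card ι * f x := by simp [hortho]

theorem walshHadamard_comp_perm [DecidableEq ι] {f : (ι → ZMod 2) → ℂ} {w : Equiv.Perm ι}
    (hf : ∀ e, f (e ∘ w) = f e) (v : ι → ZMod 2) :
    walshHadamard f (v ∘ w) = walshHadamard f v := by
  refine Fintype.sum_equiv (w.arrowCongr (Equiv.refl _)) _ _ fun e => ?_
  have he : w.arrowCongr (Equiv.refl (ZMod 2)) e = e ∘ w.symm := rfl
  have hfe : f e = f (e ∘ w.symm) := by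
    rw [← hf (e ∘ w.symm), Function.comp_assoc, w.symm_comp_self, Function.comp_id]
  rw [he, hfe, dotChar_apply, dotChar_apply, comp_equiv_symm_dotProduct]

end WalshHadamard

theorem FDRep.exists_walshHadamard_character_eq_two_pow_mul {ι : Type*} [Fintype ι]
    [DecidableEq ι] (σ : FDRep ℂ (Multiplicative (ι → ZMod 2))) (v : ι → ZMod 2) :
    ∃ N : ℕ, walshHadamard (fun e => σ.character (Multiplicative.ofAdd e)) v =
      2 ^ Fintype.card ι * N := by
  obtain ⟨N, hN⟩ := Representation.exists_sum_mul_trace_eq_card_mul σ.ρ (dotChar v).toMonoidHom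
  rw [Fintype.card_multiplicative, Fintype.card_fun, ZMod.card, Nat.cast_pow,
    Nat.cast_ofNat] at hN
  refine ⟨N, hN ▸ Fintype.sum_equiv Multiplicative.ofAdd _ _ fun u => ?_⟩
  rw [dotChar_comm]
  rfl

section Weight

variable {n : ℕ}

lemma wt_le (v : Fin n → ZMod 2) : wt v ≤ n :=
  (card_filter_le _ _).trans_eq (card_fin n)

lemma wt_vartheta {k : ℕ} (hk : k ≤ n) : wt (vartheta n k) = k := by
  simp [wt, vartheta, Fin.card_filter_val_lt, hk]

theorem exists_perm_comp_eq_vartheta (v : Fin n → ZMod 2) :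
    ∃ w : Equiv.Perm (Fin n), v ∘ w = vartheta n (wt v) := by
  obtain ⟨w, hw⟩ := Equiv.Perm.exists_map_finset_eq {j | vartheta n (wt v) j ≠ 0} {j | v j ≠ 0}
    (wt_vartheta (wt_le v))
  refine ⟨w, funext fun j => ?_⟩
  have hj : v (w j) ≠ 0 ↔ vartheta n (wt v) j ≠ 0 := by
    simpa using (congrArg (w j ∈ ·) hw).symm
  have eq_of_ne_zero_iff : ∀ a b : ZMod 2, (a ≠ 0 ↔ b ≠ 0) → a = b := by decide
  exact eq_of_ne_zero_iff _ _ hj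

theorem sum_dotChar_mul_eq_sum_sigmaChar {g : (Fin n → ZMod 2) → ℂ}
    (hg : ∀ (w : Equiv.Perm (Fin n)) v, g (v ∘ w) = g v) (x : Fin n → ZMod 2) :
    ∑ v, dotChar v x * g v = ∑ k ∈ range (n + 1), sigmaChar n k x * g (vartheta n k) := by
  rw [← sum_fiberwise_of_maps_to (g := wt) fun v _ => mem_range_succ_iff.2 (wt_le v)]
  refine sum_congr rfl fun k _ => ?_
  rw [sigmaChar, sum_mul]
  refine sum_congr rfl fun v hv => ?_
  obtain ⟨w, hw⟩ := exists_perm_comp_eq_vartheta v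
  rw [(mem_filter.1 hv).2] at hw
  rw [← hw, hg]
  rfl

end Weight

/-- Any `S_n`-invariant complex representation `σ` of `E = (ℤ/2)ⁿ` is isomorphic to
`⨁_{k=0}^n m_k(σ) σ_k`, where the multiplicities
`m_k(σ) = (1/2ⁿ) ∑_{i=0}^n χ_{σ_i}(ϑ_k) χ_σ(ϑ_i)` are non-negative integers. -/
theorem stmt_7 (n : ℕ) (σ : FDRep ℂ (Multiplicative (Fin n → ZMod 2)))
    (hinv : ∀ (w : Equiv.Perm (Fin n)) (e : Fin n → ZMod 2),
      σ.character (Multiplicative.ofAdd (e ∘ w)) = σ.character (Multiplicative.ofAdd e)) :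
    ∃ m : ℕ → ℕ,
      (∀ k ≤ n, (m k : ℂ) = ((2 : ℂ) ^ n)⁻¹ *
        ∑ i ∈ Finset.range (n + 1),
          sigmaChar n i (vartheta n k) * σ.character (Multiplicative.ofAdd (vartheta n i))) ∧
      (∀ e : Fin n → ZMod 2,
        σ.character (Multiplicative.ofAdd e) =
          ∑ k ∈ Finset.range (n + 1), (m k : ℂ) * sigmaChar n k e) := by
  have hW : ∀ (w : Equiv.Perm (Fin n)) v,
      walshHadamard (fun e => σ.character (Multiplicative.ofAdd e)) (v ∘ w) =
        walshHadamard (fun e => σ.character (Multiplicative.ofAdd e)) v :=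
    fun w => walshHadamard_comp_perm (hinv w)
  choose m hm using fun k => FDRep.exists_walshHadamard_character_eq_two_pow_mul σ (vartheta n k)
  simp only [Fintype.card_fin] at hm
  have h2n : (2 : ℂ) ^ n ≠ 0 := pow_ne_zero n two_ne_zero
  refine ⟨m, fun k _ => ?_, fun e => ?_⟩
  · rw [eq_inv_mul_iff_mul_eq₀ h2n, ← hm k]
    exact sum_dotChar_mul_eq_sum_sigmaChar hinv (vartheta n k)
  · have h := walshHadamard_walshHadamard (fun e => σ.character (Multiplicative.ofAdd e)) e
    rw [walshHadamard, sum_dotChar_mul_eq_sum_sigmaChar hW, Fintype.card_fin] at h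
    refine mul_left_cancel₀ h2n (h.symm.trans ?_)
    rw [mul_sum]
    exact sum_congr rfl fun k _ => by rw [hm]; ring
end

section
/- Let q be an odd prime power and let π be a finite-dimensional complex orthogonal representation of SL(2, q). Then χ_π(𝟙) − χ_π(−𝟙) is divisible by 8, where 𝟙 denotes the identity matrix and −𝟙 its negative. -/
open Matrix

instance : Fact (Even (Fintype.card (Fin 2))) := ⟨by simp⟩

/-!
Pick `i, j ∈ SL(2, q)` with `i² = j² = -1` and `j i = -i j`; they exist because `-1` is a sum
of two squares in `𝔽_q`. Their images `I, J` satisfy `I² = J² = π(-1)`, so `I` splits the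
`-1`-eigenspace `V₋` of `π(-1)`, of dimension `(χ(1) - χ(-1)) / 2`, into its `±i`-eigenspaces,
which `J` exchanges. Hence `χ(1) - χ(-1) = 4 dim W` with `W` the `i`-eigenspace of `I`. For
`v ∈ W` the invariant form `B v` vanishes on `W` (as `i · i ≠ 1`) and on the `+1`-eigenspace of
`π(-1)`, so `(v, w) ↦ B v (J w)` is a nondegenerate form on `W`, alternating because `J² = -1`
on `W`; therefore `dim W` is even.
-/

open Module Module.End LinearMap

section Field

variable {K V : Type*} [Field K] [AddCommGroup V] [Module K V]

theorem LinearMap.IsAlt.even_finrank [NeZero (2 : K)] [FiniteDimensional K V]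
    {C : V →ₗ[K] V →ₗ[K] K} (hC : C.IsAlt) (hnd : C.SeparatingLeft) :
    Even (finrank K V) := by
  classical
  set b := finBasis K V
  set M := toMatrix₂ b b C
  have hdet : M.det ≠ 0 := (separatingLeft_iff_det_ne_zero b).mp hnd
  have hskew : Mᵀ = -M := by
    ext i j
    simp only [M, transpose_apply, Matrix.neg_apply, toMatrix₂_apply]
    exact (hC.neg _ _).symm
  have hdet_eq : M.det = (-1) ^ finrank K V * M.det := by
    conv_lhs => rw [← det_transpose, hskew, det_neg, Fintype.card_fin]
  by_contra hodd
  rw [(Nat.not_even_iff_odd.mp hodd).neg_one_pow, neg_one_mul, eq_neg_iff_add_eq_zero,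
    ← two_mul] at hdet_eq
  exact hdet ((mul_eq_zero.mp hdet_eq).resolve_left two_ne_zero)

theorem LinearMap.apply_eq_zero_of_mem_eigenspace_of_mul_ne_one {B : V →ₗ[K] V →ₗ[K] K}
    {g : End K V} (hg : ∀ v w, B (g v) (g w) = B v w) {a b : K} (hab : a * b ≠ 1) {v w : V}
    (hv : v ∈ g.eigenspace a) (hw : w ∈ g.eigenspace b) : B v w = 0 := by
  have h := hg v w
  rw [mem_eigenspace_iff.mp hv, mem_eigenspace_iff.mp hw, map_smul, map_smul, smul_apply,
    smul_eq_mul, smul_eq_mul, ← mul_assoc, ← sub_eq_zero, ← sub_one_mul] at h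
  exact (mul_eq_zero.mp h).resolve_left (sub_ne_zero.mpr (mul_comm a b ▸ hab))

variable [NeZero (2 : K)] {E : End K V}

theorem Module.End.eigenspace_one_sup_eigenspace_neg_one (hE : E * E = 1) :
    E.eigenspace 1 ⊔ E.eigenspace (-1) = ⊤ := by
  refine eq_top_iff.mpr fun v _ => ?_
  have hEE : E (E v) = v := by rw [← mul_apply, hE, one_apply]
  have hv : v = (2⁻¹ : K) • (v + E v) + (2⁻¹ : K) • (v - E v) := by
    rw [← smul_add, add_add_sub_cancel, ← two_smul K, smul_smul, inv_mul_cancel₀ two_ne_zero,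
      one_smul]
  rw [hv]
  refine Submodule.add_mem_sup (mem_eigenspace_iff.mpr ?_) (mem_eigenspace_iff.mpr ?_)
  · simp only [map_smul, map_add, hEE, one_smul]
    module
  · simp only [map_smul, map_sub, hEE]
    module

theorem Module.End.trace_one_sub_eq_two_mul_finrank_eigenspace [FiniteDimensional K V]
    (hE : E * E = 1) : trace K V (1 - E) = 2 * finrank K (E.eigenspace (-1)) := by
  have hEE : ∀ v, E (E v) = v := fun v => by
    rw [← mul_apply, hE, one_apply]
  have hproj : IsProj (E.eigenspace (-1)) ((2⁻¹ : K) • (1 - E)) := by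
    refine ⟨fun v => mem_eigenspace_iff.mpr ?_, fun v hv => ?_⟩
    · simp only [LinearMap.smul_apply, LinearMap.sub_apply, one_apply, map_smul, map_sub, hEE]
      module
    · simp only [LinearMap.smul_apply, LinearMap.sub_apply, one_apply, mem_eigenspace_iff.mp hv]
      match_scalars
      simp [field, one_add_one_eq_two]
  rw [show (1 - E) = (2 : K) • ((2⁻¹ : K) • (1 - E)) by
    rw [smul_smul, mul_inv_cancel₀ two_ne_zero, one_smul], map_smul, hproj.trace, smul_eq_mul]

end Field

section Quaternion

variable {V : Type*} [AddCommGroup V] [Module ℂ V] {I J : End ℂ V}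

theorem Module.End.eigenspace_mul_self_neg_one_eq_sup (I : End ℂ V) :
    (I * I).eigenspace (-1) = I.eigenspace Complex.I ⊔ I.eigenspace (-Complex.I) := by
  apply le_antisymm
  · intro v hv
    have hIIv : I (I v) = -v := by simpa using mem_eigenspace_iff.mp hv
    have hv : v =
        (2⁻¹ : ℂ) • (v - Complex.I • I v) + (2⁻¹ : ℂ) • (v + Complex.I • I v) := by
      module
    rw [hv]
    refine Submodule.add_mem_sup (mem_eigenspace_iff.mpr ?_) (mem_eigenspace_iff.mpr ?_) <;>
    · simp only [map_smul, map_sub, map_add, hIIv]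
      match_scalars <;> simp [field]
  · refine sup_le (fun v hv => ?_) (fun v hv => ?_) <;>
    · simp [mem_eigenspace_iff.mp hv, smul_smul]

theorem Module.End.finrank_eigenspace_mul_self_neg_one [FiniteDimensional ℂ V] (I : End ℂ V) :
    finrank ℂ ((I * I).eigenspace (-1)) =
      finrank ℂ (I.eigenspace Complex.I) + finrank ℂ (I.eigenspace (-Complex.I)) := by
  have hdisj : I.eigenspace Complex.I ⊓ I.eigenspace (-Complex.I) = ⊥ :=
    (I.eigenspaces_iSupIndep.pairwiseDisjoint
      fun h => Complex.I_ne_zero (self_eq_neg.mp h)).eq_bot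
  rw [← Submodule.finrank_sup_add_finrank_inf_eq, hdisj, finrank_bot, add_zero,
    eigenspace_mul_self_neg_one_eq_sup]

-- the relations of the quaternion group, with `I * I` in the role of `-1`
variable (hJJ : J * J = I * I) (hE : I * I * (I * I) = 1) (hJI : J * I = I * I * (I * J))
include hJJ hE hJI

theorem Module.End.mem_eigenspace_neg_of_mem_eigenspace {μ : ℂ} (hμ : μ * μ = -1) {v : V}
    (hv : v ∈ I.eigenspace μ) : J v ∈ I.eigenspace (-μ) := by
  have hIv : I v = μ • v := mem_eigenspace_iff.mp hv
  have hEJv : I (I (J v)) = -J v :=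
    calc I (I (J v)) = J ((J * J) v) := by rw [← mul_apply, ← hJJ]; rfl
      _ = -J v := by rw [hJJ, mul_apply, hIv, map_smul, hIv, smul_smul, hμ, neg_one_smul, map_neg]
  refine mem_eigenspace_iff.mpr ?_
  calc I (J v) = (I * I * (I * I)) (I (J v)) := by rw [hE, one_apply]
    _ = (I * I) ((J * I) v) := by rw [hJI]; rfl
    _ = I (I (J (I v))) := rfl
    _ = -μ • J v := by rw [hIv, map_smul, map_smul, map_smul, hEJv, smul_neg, neg_smul]

theorem Module.End.finrank_eigenspace_neg_I_eq [FiniteDimensional ℂ V] :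
    finrank ℂ (I.eigenspace (-Complex.I)) = finrank ℂ (I.eigenspace Complex.I) := by
  have hJ : Function.Injective J := by
    refine Function.LeftInverse.injective (g := J * J * J) fun v => ?_
    rw [← mul_apply, mul_assoc, hJJ, hE, one_apply]
  have hle {μ : ℂ} (hμ : μ * μ = -1) :
      finrank ℂ (I.eigenspace μ) ≤ finrank ℂ (I.eigenspace (-μ)) :=
    LinearMap.finrank_le_finrank_of_injective (f := J.restrict fun v hv =>
      mem_eigenspace_neg_of_mem_eigenspace hJJ hE hJI hμ hv)
      fun x y hxy => Subtype.ext (hJ (congrArg Subtype.val hxy))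
  refine le_antisymm ?_ (hle Complex.I_mul_I)
  have h := hle (μ := -Complex.I) (by simp)
  rwa [neg_neg] at h

variable {B : V →ₗ[ℂ] V →ₗ[ℂ] ℂ} (hBsymm : ∀ v w, B v w = B w v)
  (hBsep : B.SeparatingLeft) (hIB : ∀ v w, B (I v) (I w) = B v w)
  (hJB : ∀ v w, B (J v) (J w) = B v w)
include hBsymm hBsep hIB hJB

theorem Module.End.even_finrank_eigenspace_I [FiniteDimensional ℂ V] :
    Even (finrank ℂ (I.eigenspace Complex.I)) := by
  set W := I.eigenspace Complex.I
  have hJJ_of_mem {u : V} (hu : u ∈ (I * I).eigenspace (-1)) : J (J u) = -u := by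
    rw [← mul_apply, hJJ, mem_eigenspace_iff.mp hu, neg_one_smul]
  have hW' : I.eigenspace (-Complex.I) ≤ (I * I).eigenspace (-1) :=
    le_sup_right.trans (eigenspace_mul_self_neg_one_eq_sup I).ge
  have hW : W ≤ (I * I).eigenspace (-1) :=
    le_sup_left.trans (eigenspace_mul_self_neg_one_eq_sup I).ge
  refine LinearMap.IsAlt.even_finrank (C := B.compl₁₂ W.subtype (J ∘ₗ W.subtype)) ?_ ?_
  · intro ⟨v, hv⟩
    have h := hJB v (J v)
    rw [hJJ_of_mem (hW hv), map_neg, hBsymm] at h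
    exact self_eq_neg.mp h.symm
  intro ⟨v, hv⟩ hvW
  refine Subtype.ext (hBsep v fun u => ?_)
  suffices ⊤ ≤ LinearMap.ker (B v) from this Submodule.mem_top
  have hIIB : ∀ x y, B ((I * I) x) ((I * I) y) = B x y := fun x y => by
    rw [mul_apply, mul_apply, hIB, hIB]
  rw [← eigenspace_one_sup_eigenspace_neg_one hE, eigenspace_mul_self_neg_one_eq_sup I]
  refine sup_le (fun u hu => ?_) (sup_le (fun u hu => ?_) fun u hu => ?_)
  · exact apply_eq_zero_of_mem_eigenspace_of_mul_ne_one hIIB (by norm_num) (hW hv) hu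
  · exact apply_eq_zero_of_mem_eigenspace_of_mul_ne_one hIB (by norm_num) hv hu
  · have hJu := mem_eigenspace_neg_of_mem_eigenspace hJJ hE hJI (μ := -Complex.I) (by simp) hu
    rw [neg_neg] at hJu
    have h : B v (J (-J u)) = 0 := hvW ⟨-J u, neg_mem hJu⟩
    rwa [map_neg, hJJ_of_mem (hW' hu), neg_neg] at h

theorem Module.End.exists_trace_one_sub_mul_self_eq_eight_mul [FiniteDimensional ℂ V] :
    ∃ m : ℕ, trace ℂ V (1 - I * I) = 8 * m := by
  obtain ⟨m, hm⟩ := even_finrank_eigenspace_I hJJ hE hJI hBsymm hBsep hIB hJB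
  refine ⟨m, ?_⟩
  rw [trace_one_sub_eq_two_mul_finrank_eigenspace hE, finrank_eigenspace_mul_self_neg_one,
    finrank_eigenspace_neg_I_eq hJJ hE hJI, hm]
  push_cast
  ring

end Quaternion

theorem FDRep.IsOrthogonal.exists_character_one_sub_eq_eight_mul {G : Type} [Group G]
    {π : FDRep ℂ G} (hπ : π.IsOrthogonal) {i j z : G} (hi : i * i = z) (hj : j * j = z)
    (hz : z * z = 1) (hji : j * i = z * (i * j)) :
    ∃ m : ℕ, π.character 1 - π.character z = 8 * m := by
  obtain ⟨B, hBsymm, hBsep, hBinv⟩ := hπ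
  have hρ (g h : G) : π.ρ g * π.ρ h = π.ρ (g * h) := (map_mul π.ρ g h).symm
  have hI : π.ρ i * π.ρ i = π.ρ z := by rw [hρ, hi]
  obtain ⟨m, hm⟩ := exists_trace_one_sub_mul_self_eq_eight_mul (I := π.ρ i) (J := π.ρ j)
    (by rw [hI, hρ, hj]) (by rw [hI, hρ, hz, map_one]) (by rw [hI, hρ, hρ, hρ, hji])
    hBsymm hBsep (hBinv i) (hBinv j)
  exact ⟨m, by rw [FDRep.character, FDRep.character, map_one, ← map_sub, ← hI, hm]⟩

theorem FiniteField.exists_sq_add_sq_eq_neg_one (F : Type*) [Field F] [Finite F] :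
    ∃ a b : F, a ^ 2 + b ^ 2 = -1 := by
  obtain ⟨p, _⟩ := CharP.exists F
  have : NeZero p := ⟨CharP.char_ne_zero_of_finite F p⟩
  obtain ⟨a, b, hab⟩ := CharP.sq_add_sq F p (-1)
  exact ⟨a, b, mod_cast hab⟩

theorem Matrix.SpecialLinearGroup.exists_quaternion_pair (F : Type*) [Field F] [Finite F] :
    ∃ i j : SpecialLinearGroup (Fin 2) F, i * i = -1 ∧ j * j = -1 ∧ j * i = -1 * (i * j) := by
  obtain ⟨a, b, hab⟩ := FiniteField.exists_sq_add_sq_eq_neg_one F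
  obtain ⟨i, hi⟩ : ∃ i : SpecialLinearGroup (Fin 2) F,
      (i : Matrix (Fin 2) (Fin 2) F) = !![a, b; b, -a] :=
    ⟨⟨!![a, b; b, -a], by rw [det_fin_two_of]; linear_combination -hab⟩, rfl⟩
  obtain ⟨j, hj⟩ : ∃ j : SpecialLinearGroup (Fin 2) F,
      (j : Matrix (Fin 2) (Fin 2) F) = !![0, 1; -1, 0] :=
    ⟨⟨!![0, 1; -1, 0], by rw [det_fin_two_of]; ring⟩, rfl⟩
  have hcoe {A B : SpecialLinearGroup (Fin 2) F}
      (h : (A : Matrix (Fin 2) (Fin 2) F) = B) : A = B := Subtype.ext h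
  refine ⟨i, j, hcoe ?_, hcoe ?_, hcoe ?_⟩ <;>
  · simp only [coe_mul, coe_neg, coe_one, hi, hj, mul_fin_two, one_fin_two, neg_one_mul, neg_of]
    ext k l
    fin_cases k <;> fin_cases l <;> simp <;> grind

theorem stmt_13_general (F : Type) [Field F] [Fintype F]
    (π : FDRep ℂ (SpecialLinearGroup (Fin 2) F)) (hπ : π.IsOrthogonal) :
    ∃ z : ℤ, π.character 1 - π.character (-1) = 8 * (z : ℂ) := by
  obtain ⟨i, j, hi, hj, hji⟩ := SpecialLinearGroup.exists_quaternion_pair F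
  obtain ⟨m, hm⟩ := hπ.exists_character_one_sub_eq_eight_mul hi hj (by simp) hji
  exact ⟨m, by rw [hm]; norm_cast⟩

/-- For `q` an odd prime power and `π` a finite-dimensional complex orthogonal representation of
`SL(2,q)`, the integer `χ_π(𝟙) − χ_π(−𝟙)` is divisible by `8`. -/
theorem stmt_13 (F : Type) [Field F] [Fintype F] (hq : Odd (Fintype.card F))
    (π : FDRep ℂ (SpecialLinearGroup (Fin 2) F)) (hπ : π.IsOrthogonal) :
    ∃ z : ℤ, π.character 1 - π.character (-1) = 8 * (z : ℂ) :=
  stmt_13_general F π hπ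
end

section
/- Let F be a finite field of odd cardinality. Then there exists an injective group homomorphism from the quaternion group Q of order 8 into SL(2, F) which sends the unique central involution −1 ∈ Q to the matrix −𝟙 ∈ SL(2, F). -/
/-!
The quaternion group `Q₈ = ⟨i, j | i⁴ = 1, j² = i², i j = j i⁻¹⟩` maps to `SL(2, F)` via
`i ↦ !![0, -1; 1, 0]` and `j ↦ !![α, β; β, -α]`, where `α² + β² = -1`; such `α, β` exist in every
finite field, since every element of a prime field is a sum of two squares. The central element
`i² = -1` is the only involution of `Q₈` and lies in every nontrivial subgroup, so a homomorphism
sending it to `-𝟙 ≠ 𝟙` (odd characteristic) has trivial kernel.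
-/

open Matrix

theorem pow_val_eq_zpow_of_intCast_eq {G : Type*} [Group G] {N : ℕ} [NeZero N] {g : G}
    (hg : g ^ N = 1) {i : ZMod N} {k : ℤ} (hk : (k : ZMod N) = i) : g ^ i.val = g ^ k := by
  rw [← zpow_natCast, zpow_eq_zpow_iff_modEq]
  refine Int.ModEq.of_dvd (Int.natCast_dvd_natCast.2 (orderOf_dvd_of_pow_eq_one hg)) ?_
  rw [← ZMod.intCast_eq_intCast_iff, hk]
  simp

theorem ZMod.eq_of_add_self_eq_zero_of_ne_zero {n : ℕ} [NeZero n] {i : ZMod (2 * n)}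
    (h : i + i = 0) (hi : i ≠ 0) : i = n := by
  obtain ⟨k, hk⟩ : 2 * n ∣ i.val + i.val := by
    rw [← ZMod.natCast_eq_zero_iff, Nat.cast_add, ZMod.natCast_zmod_val, h]
  have hlt := ZMod.val_lt i
  have hpos : 0 < i.val := Nat.pos_of_ne_zero ((ZMod.val_ne_zero i).2 hi)
  obtain rfl : k = 1 := by
    rcases Nat.lt_or_ge k 2 with hk2 | hk2
    · interval_cases k <;> omega
    · nlinarith
  rw [← ZMod.natCast_zmod_val i]
  congr 1
  omega

namespace QuaternionGroup

def lift {G : Type*} [Group G] {n : ℕ} [NeZero n] (a x : G) (ha : a ^ (2 * n) = 1)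
    (hx : x ^ 2 = a ^ n) (hax : a * x = x * a⁻¹) : QuaternionGroup n →* G where
  toFun
    | .a i => a ^ i.val
    | .xa i => x * a ^ i.val
  map_one' := by rw [one_def]; simp
  map_mul' := by
    have hcomm (k : ℤ) : a ^ k * x = x * a ^ (-k) := by
      simpa [_root_.zpow_neg] using (SemiconjBy.zpow_right hax.symm k).eq.symm
    have hval (i : ZMod (2 * n)) {k : ℤ} (hk : (k : ZMod (2 * n)) = i) : a ^ i.val = a ^ k :=
      pow_val_eq_zpow_of_intCast_eq ha hk
    rintro (i | i) (j | j)
    · simp only [a_mul_a]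
      rw [hval (i + j) (k := i.val + j.val) (by simp), _root_.zpow_add, zpow_natCast,
        zpow_natCast]
    · simp only [a_mul_xa]
      rw [hval (j - i) (k := -i.val + j.val) (by push_cast [ZMod.natCast_zmod_val]; ring), _root_.zpow_add,
        ← mul_assoc, ← hcomm, mul_assoc, zpow_natCast, zpow_natCast]
    · simp only [xa_mul_a]
      rw [hval (i + j) (k := i.val + j.val) (by simp), _root_.zpow_add, zpow_natCast,
        zpow_natCast, mul_assoc]
    · simp only [xa_mul_xa]
      rw [hval (n + j - i) (k := n + -i.val + j.val) (by push_cast [ZMod.natCast_zmod_val]; ring),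
        _root_.zpow_add, _root_.zpow_add, ← zpow_natCast a i.val, mul_assoc x, ← mul_assoc _ x,
        hcomm, ← mul_assoc, ← mul_assoc, ← sq, hx, zpow_natCast, zpow_natCast]

theorem eq_a_of_orderOf_eq_two {n : ℕ} [NeZero n] {z : QuaternionGroup n} (hz : orderOf z = 2) :
    z = a n := by
  have : Fact (Nat.Prime 2) := ⟨Nat.prime_two⟩
  rcases z with i | i
  · obtain ⟨hsq, hne⟩ := orderOf_eq_prime_iff.1 hz
    rw [sq, a_mul_a, one_def, a.injEq] at hsq
    rw [one_def, ne_eq, a.injEq] at hne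
    rw [ZMod.eq_of_add_self_eq_zero_of_ne_zero hsq hne]
  · simp [orderOf_xa] at hz

theorem injective_of_map_a_two_ne_one {G : Type*} [Group G] {f : QuaternionGroup 2 →* G}
    (hf : f (a 2) ≠ 1) : Function.Injective f := by
  have h_sq : ∀ z : QuaternionGroup 2, z ≠ 1 → z = a 2 ∨ z ^ 2 = a 2 := by decide
  refine (injective_iff_map_eq_one f).2 fun z hz => ?_
  by_contra hne
  rcases h_sq z hne with rfl | hsq
  · exact hf hz
  · exact hf (by rw [← hsq, map_pow, hz, one_pow])

end QuaternionGroup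

namespace Matrix.SpecialLinearGroup

variable {R : Type*} [CommRing R]

def quaternionI (R : Type*) [CommRing R] : SpecialLinearGroup (Fin 2) R :=
  ⟨!![0, -1; 1, 0], by simp [det_fin_two_of]⟩

def quaternionJ {α β : R} (h : α ^ 2 + β ^ 2 = -1) : SpecialLinearGroup (Fin 2) R :=
  ⟨!![α, β; β, -α], by rw [det_fin_two_of]; linear_combination -h⟩

@[simp]
theorem coe_quaternionI : (quaternionI R : Matrix (Fin 2) (Fin 2) R) = !![0, -1; 1, 0] := rfl

@[simp]
theorem coe_quaternionJ {α β : R} (h : α ^ 2 + β ^ 2 = -1) :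
    (quaternionJ h : Matrix (Fin 2) (Fin 2) R) = !![α, β; β, -α] := rfl

theorem quaternionI_sq : quaternionI R ^ 2 = -1 := by
  ext i j
  fin_cases i <;> fin_cases j <;> simp [sq]

theorem quaternionJ_sq {α β : R} (h : α ^ 2 + β ^ 2 = -1) : quaternionJ h ^ 2 = -1 := by
  ext i j
  fin_cases i <;> fin_cases j <;> simp [sq, mul_comm] <;> linear_combination h

theorem quaternionI_mul_quaternionJ {α β : R} (h : α ^ 2 + β ^ 2 = -1) :
    quaternionI R * quaternionJ h = quaternionJ h * (quaternionI R)⁻¹ := by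
  ext i j
  fin_cases i <;> fin_cases j <;> simp [coe_inv, adjugate_fin_two_of]

theorem exists_quaternionGroup_hom {α β : R} (h : α ^ 2 + β ^ 2 = -1) :
    ∃ f : QuaternionGroup 2 →* SpecialLinearGroup (Fin 2) R, f (.a 2) = -1 :=
  ⟨QuaternionGroup.lift (quaternionI R) (quaternionJ h) (by rw [pow_mul, quaternionI_sq]; simp)
    (by rw [quaternionI_sq, quaternionJ_sq]) (quaternionI_mul_quaternionJ h), quaternionI_sq⟩

theorem neg_one_ne_one {n : Type*} [Fintype n] [DecidableEq n] [Nonempty n]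
    [Fact (Even (Fintype.card n))] [Nontrivial R] (hR : ringChar R ≠ 2) :
    (-1 : SpecialLinearGroup n R) ≠ 1 := fun h => by
  obtain ⟨i⟩ := ‹Nonempty n›
  exact Ring.neg_one_ne_one_of_char_ne_two hR (by simpa using (ext_iff _ _).1 h i i)

end Matrix.SpecialLinearGroup

theorem FiniteField.ringChar_ne_two_of_odd_card {F : Type*} [Field F] [Fintype F]
    (hF : Odd (Fintype.card F)) : ringChar F ≠ 2 := fun h => by
  have := FiniteField.even_card_of_char_two h
  rw [Nat.odd_iff] at hF
  omega

open Matrix.SpecialLinearGroup in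
/-- For a finite field `F` of odd cardinality, there is an injective group homomorphism from the
quaternion group `Q` of order `8` into `SL(2, F)` sending the unique central involution
`−1 ∈ Q` (the unique element of order 2) to the matrix `−𝟙`. -/
theorem stmt_16 (F : Type) [Field F] [Fintype F] (hq : Odd (Fintype.card F)) :
    ∃ f : QuaternionGroup 2 →* SpecialLinearGroup (Fin 2) F,
      Function.Injective f ∧
      ∀ z : QuaternionGroup 2, orderOf z = 2 →
        ((f z : Matrix (Fin 2) (Fin 2) F)) = -1 := by
  have : NeZero (ringChar F) := ⟨CharP.char_ne_zero_of_finite F _⟩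
  obtain ⟨a, b, hab⟩ := CharP.sq_add_sq F (ringChar F) (-1)
  obtain ⟨f, hf⟩ := exists_quaternionGroup_hom (R := F) (α := a) (β := b) (by simpa using hab)
  have hneg := neg_one_ne_one (n := Fin 2) (FiniteField.ringChar_ne_two_of_odd_card hq)
  refine ⟨f, QuaternionGroup.injective_of_map_a_two_ne_one (hf ▸ hneg), fun z hz => ?_⟩
  rw [QuaternionGroup.eq_a_of_orderOf_eq_two hz]
  simp [hf]
end
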